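/- arXiv:2504.14351 — 3 statements merged into one kernel-verified Lean document; each statement's English description precedes it below -/
import Mathlib

section
/- Let m be a positive natural number and s : Fin m → ℝ with s i ≥ Real.exp 2 for all i, sorted in decreasing order (i ≤ j implies s i ≥ s j). Then for every k ≤ m, (∑_{i < k} Real.log (s i)) · (∑_{i} Real.sqrt (s i)) ≤ (∑_{i < k} Real.sqrt (s i)) · (∑_{i} Real.log (s i)); that is, the cumulative weight share of the top k validators under logarithmic stake weights is at most their share under square-root stake weights. -/
/-! Since `log x / √x` is antitone on `[e², ∞)`, a top validator `i` and a lower one `j` satisfy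
`log sᵢ · √sⱼ ≤ √sᵢ · log sⱼ`. Summing over all such pairs compares the top group with the rest,
and adding the products within the top group to both sides gives the claim. -/

open Finset

section CrossSums

variable {ι R : Type*} [CommSemiring R] [PartialOrder R] [IsOrderedRing R] {f g : ι → R}

theorem sum_mul_sum_le_sum_mul_sum_of_forall_mul_le {A B : Finset ι}
    (h : ∀ i ∈ A, ∀ j ∈ B, f i * g j ≤ g i * f j) :
    (∑ i ∈ A, f i) * (∑ j ∈ B, g j) ≤ (∑ i ∈ A, g i) * (∑ j ∈ B, f j) := by
  simp only [sum_mul_sum]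
  exact sum_le_sum fun i hi => sum_le_sum fun j hj => h i hi j hj

theorem sum_mul_sum_univ_le_of_forall_mul_le [Fintype ι] [DecidableEq ι] {A : Finset ι}
    (h : ∀ i ∈ A, ∀ j ∉ A, f i * g j ≤ g i * f j) :
    (∑ i ∈ A, f i) * (∑ j, g j) ≤ (∑ i ∈ A, g i) * (∑ j, f j) := by
  have hcross := sum_mul_sum_le_sum_mul_sum_of_forall_mul_le (B := Aᶜ)
    fun i hi j hj => h i hi j (mem_compl.mp hj)
  rw [← sum_add_sum_compl A g, ← sum_add_sum_compl A f, mul_add, mul_add, mul_comm]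
  exact add_le_add_right hcross _

end CrossSums

theorem log_mul_sqrt_le_sqrt_mul_log {a b : ℝ} (hb : Real.exp 2 ≤ b) (hab : b ≤ a) :
    Real.log a * √b ≤ √a * Real.log b := by
  have hb₀ : 0 < √b := Real.sqrt_pos.mpr ((Real.exp_pos 2).trans_le hb)
  have ha₀ : 0 < √a := hb₀.trans_le (Real.sqrt_le_sqrt hab)
  have hratio : Real.log a / √a ≤ Real.log b / √b :=
    Real.log_div_sqrt_antitoneOn hb (hb.trans hab) hab
  rw [div_le_div_iff₀ ha₀ hb₀] at hratio
  linarith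

theorem lsw_lorenz_dominates_srsw_general (m : ℕ) (s : Fin m → ℝ)
    (hs : ∀ i, Real.exp 2 ≤ s i)
    (hsorted : ∀ i j : Fin m, i ≤ j → s j ≤ s i) :
    ∀ k : ℕ, k ≤ m →
      (∑ i ∈ univ.filter (fun i : Fin m => (i : ℕ) < k), Real.log (s i)) *
          (∑ i, Real.sqrt (s i)) ≤
        (∑ i ∈ univ.filter (fun i : Fin m => (i : ℕ) < k), Real.sqrt (s i)) *
          (∑ i, Real.log (s i)) := by
  intro k _
  refine sum_mul_sum_univ_le_of_forall_mul_le fun i hi j hj => ?_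
  have hik : (i : ℕ) < k := (mem_filter.mp hi).2
  have hkj : k ≤ (j : ℕ) := by simpa using hj
  exact log_mul_sqrt_le_sqrt_mul_log (hs j) (hsorted i j (Fin.le_def.mpr (hik.le.trans hkj)))

/-- Lorenz dominance of logarithmic stake weights over square-root stake weights:
for stakes `s ≥ e²` sorted in decreasing order, the cumulative weight share of the
top `k` validators under `log` weights is at most that under `√` weights. -/
theorem lsw_lorenz_dominates_srsw (m : ℕ) (hm : 0 < m) (s : Fin m → ℝ)
    (hs : ∀ i, Real.exp 2 ≤ s i)
    (hsorted : ∀ i j : Fin m, i ≤ j → s j ≤ s i) :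
    ∀ k : ℕ, k ≤ m →
      (∑ i ∈ univ.filter (fun i : Fin m => (i : ℕ) < k), Real.log (s i)) *
          (∑ i, Real.sqrt (s i)) ≤
        (∑ i ∈ univ.filter (fun i : Fin m => (i : ℕ) < k), Real.sqrt (s i)) *
          (∑ i, Real.log (s i)) :=
  lsw_lorenz_dominates_srsw_general m s hs hsorted
end

section
/- Let m be a positive natural number and s : Fin m → ℝ with s i > 0 for all i. Define, for a weight function w : Fin m → ℝ, N_S(w) as the minimum cardinality of a subset K ⊆ Fin m such that ∑_{i ∈ K} w i ≥ (2/3) · ∑_i w i. Then N_S(fun i => Real.sqrt (s i)) ≥ N_S(s); that is, the Nakamoto coefficient for safety under the Square Root Stake Weight model is at least that under the linear stake-weight model. -/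
open Finset

/-- The Nakamoto coefficient for safety of a weight function `w` on `m` validators:
the minimum cardinality of a subset of validators whose cumulative weight is at least
two-thirds of the total weight. -/
noncomputable def nakamotoSafety (m : ℕ) (w : Fin m → ℝ) : ℕ :=
  sInf {n : ℕ | ∃ K : Finset (Fin m), K.card = n ∧ (2 / 3 : ℝ) * ∑ i, w i ≤ ∑ i ∈ K, w i}

/-!
Take a cheapest quorum `K` for the weights `√s`. Among sets of the same size, a set `T` of
validators with the largest stakes carries at least as much `√s`-weight as `K`, so it is a
`√s`-quorum too. For such a top set the share of `a² = s` it carries dominates its share of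
`a = √s` (a Chebyshev-type inequality: the cross terms `aᵢ aⱼ (aᵢ - aⱼ)` with `i ∈ T`, `j ∉ T`
are nonnegative), so `T` is also an `s`-quorum of the same size.
-/

section TopSet

variable {ι : Type*}

def IsTopSet (a : ι → ℝ) (T : Finset ι) : Prop :=
  ∀ i ∈ T, ∀ j ∉ T, a j ≤ a i

/-- An exchange argument: swapping `i ∈ T` for `j ∉ T` keeps the size and changes the sum
by `a j - a i`. -/
theorem isTopSet_of_forall_sum_le [DecidableEq ι] {a : ι → ℝ} {T : Finset ι}
    (hmax : ∀ K : Finset ι, K.card = T.card → ∑ k ∈ K, a k ≤ ∑ k ∈ T, a k) :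
    IsTopSet a T := by
  intro i hi j hj
  have hj' : j ∉ T.erase i := fun h => hj (mem_of_mem_erase h)
  have hcard : (insert j (T.erase i)).card = T.card := by
    rw [card_insert_of_notMem hj', card_erase_of_mem hi]
    exact Nat.sub_add_cancel (card_pos.mpr ⟨i, hi⟩)
  have hswap := hmax _ hcard
  rw [sum_insert hj', ← add_sum_erase T a hi] at hswap
  linarith

theorem exists_isTopSet_card_eq_sum_le [Fintype ι] [DecidableEq ι] (a : ι → ℝ) (K : Finset ι) :
    ∃ T : Finset ι, T.card = K.card ∧ IsTopSet a T ∧ ∑ k ∈ K, a k ≤ ∑ k ∈ T, a k := by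
  obtain ⟨T, hT, hmax⟩ := exists_max_image (powersetCard K.card univ) (fun T => ∑ k ∈ T, a k)
    ⟨K, mem_powersetCard_univ.mpr rfl⟩
  rw [mem_powersetCard_univ] at hT
  refine ⟨T, hT, isTopSet_of_forall_sum_le fun L hL => ?_, hmax K (mem_powersetCard_univ.mpr rfl)⟩
  exact hmax L (mem_powersetCard_univ.mpr (hL.trans hT))

theorem IsTopSet.sum_mul_sum_sq_le [Fintype ι] [DecidableEq ι] {a : ι → ℝ} {T : Finset ι}
    (ha : ∀ i, 0 ≤ a i) (hT : IsTopSet a T) :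
    (∑ i ∈ T, a i) * ∑ i, a i ^ 2 ≤ (∑ i ∈ T, a i ^ 2) * ∑ i, a i := by
  have hcross : (∑ i ∈ T, a i) * ∑ j ∈ Tᶜ, a j ^ 2 ≤ (∑ i ∈ T, a i ^ 2) * ∑ j ∈ Tᶜ, a j := by
    rw [sum_mul_sum, sum_mul_sum]
    refine sum_le_sum fun i hi => sum_le_sum fun j hj => ?_
    have hji := hT i hi j (mem_compl.mp hj)
    nlinarith [mul_nonneg (mul_nonneg (ha i) (ha j)) (sub_nonneg.mpr hji)]
  rw [← sum_add_sum_compl T fun i => a i ^ 2, ← sum_add_sum_compl T a]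
  linarith

theorem IsTopSet.mul_sum_sq_le_of_mul_sum_le [Fintype ι] [DecidableEq ι]
    {a : ι → ℝ} {T : Finset ι} {c : ℝ}
    (ha : ∀ i, 0 ≤ a i) (hT : IsTopSet a T) (hc : c * ∑ i, a i ≤ ∑ i ∈ T, a i) :
    c * ∑ i, a i ^ 2 ≤ ∑ i ∈ T, a i ^ 2 := by
  rcases (sum_nonneg fun i _ => ha i : 0 ≤ ∑ i, a i).eq_or_lt with hzero | hpos
  · have ha0 : ∀ i, a i = 0 := fun i =>
      (sum_eq_zero_iff_of_nonneg fun i _ => ha i).mp hzero.symm i (mem_univ i)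
    simp [ha0]
  · have hsq : 0 ≤ ∑ i, a i ^ 2 := sum_nonneg fun i _ => sq_nonneg (a i)
    refine le_of_mul_le_mul_right ?_ hpos
    calc c * (∑ i, a i ^ 2) * ∑ i, a i = (c * ∑ i, a i) * ∑ i, a i ^ 2 := by ring
      _ ≤ (∑ i ∈ T, a i) * ∑ i, a i ^ 2 := mul_le_mul_of_nonneg_right hc hsq
      _ ≤ (∑ i ∈ T, a i ^ 2) * ∑ i, a i := hT.sum_mul_sum_sq_le ha

end TopSet

theorem nakamotoSafety_le_card {m : ℕ} {w : Fin m → ℝ} {K : Finset (Fin m)}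
    (hK : (2 / 3 : ℝ) * ∑ i, w i ≤ ∑ i ∈ K, w i) : nakamotoSafety m w ≤ K.card :=
  Nat.sInf_le ⟨K, rfl, hK⟩

theorem exists_card_eq_nakamotoSafety {m : ℕ} {w : Fin m → ℝ} (hw : 0 ≤ ∑ i, w i) :
    ∃ K : Finset (Fin m), K.card = nakamotoSafety m w ∧
      (2 / 3 : ℝ) * ∑ i, w i ≤ ∑ i ∈ K, w i := by
  have hne : {n : ℕ | ∃ K : Finset (Fin m), K.card = n ∧
      (2 / 3 : ℝ) * ∑ i, w i ≤ ∑ i ∈ K, w i}.Nonempty := ⟨_, univ, rfl, by linarith⟩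
  exact Nat.sInf_mem hne

theorem srsw_nakamoto_safety_ge_general (m : ℕ) (s : Fin m → ℝ)
    (hs : ∀ i, 0 < s i) :
    nakamotoSafety m s ≤ nakamotoSafety m (fun i => Real.sqrt (s i)) := by
  have hsqrt : ∀ i, 0 ≤ Real.sqrt (s i) := fun i => Real.sqrt_nonneg (s i)
  obtain ⟨K, hK, hKquorum⟩ := exists_card_eq_nakamotoSafety (sum_nonneg fun i _ => hsqrt i)
  obtain ⟨T, hT, htop, hKT⟩ := exists_isTopSet_card_eq_sum_le (fun i => Real.sqrt (s i)) K
  rw [← hK, ← hT]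
  apply nakamotoSafety_le_card
  have hquorum := htop.mul_sum_sq_le_of_mul_sum_le hsqrt (hKquorum.trans hKT)
  simpa only [Real.sq_sqrt (hs _).le] using hquorum

/-- Lemma 1 (safety half): the Nakamoto coefficient for safety under the
Square Root Stake Weight model is at least that under the linear stake-weight model. -/
theorem srsw_nakamoto_safety_ge (m : ℕ) (hm : 0 < m) (s : Fin m → ℝ)
    (hs : ∀ i, 0 < s i) :
    nakamotoSafety m s ≤ nakamotoSafety m (fun i => Real.sqrt (s i)) :=
  srsw_nakamoto_safety_ge_general m s hs
end

section
/- Let m be a positive natural number and s : Fin m → ℝ with s i ≥ Real.exp 1 for all i. Define the Herfindahl-Hirschman Index of a positive weight function w : Fin m → ℝ as HHI(w) = ∑_{i} (w i / ∑_{j} w j)^2. Then HHI(fun i => Real.log (s i)) ≤ HHI(s); that is, the HHI of the logarithmic stake weights is at most the HHI of the linear stake weights. -/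
/-!
Normalising by the total weight, `hhi w = (∑ wᵢ²) / (∑ wᵢ)²`, so the claim is
`(∑ (log sᵢ)²) B² ≤ (∑ sᵢ²) A²` with `A = ∑ log sᵢ`, `B = ∑ sᵢ`. On `[e, ∞)` the ratio
`log x / x` is antitone, so it is oppositely ordered to both `sᵢ` and `log sᵢ`. Chebyshev's sum
inequality with weights `sᵢ` then gives `(∑ (log sᵢ)²) B ≤ (∑ sᵢ log sᵢ) A` and
`(∑ sᵢ log sᵢ) B ≤ (∑ sᵢ²) A`, which chain to the claim.
-/

open Finset

/-- The Herfindahl-Hirschman Index of a weight function `w` on `m` validators: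
the sum of squared normalized weights. -/
noncomputable def hhi (m : ℕ) (w : Fin m → ℝ) : ℝ :=
  ∑ i, (w i / ∑ j, w j) ^ 2

theorem hhi_eq_sum_sq_div (m : ℕ) (w : Fin m → ℝ) :
    hhi m w = (∑ i, w i ^ 2) / (∑ i, w i) ^ 2 := by
  simp only [hhi, div_pow, sum_div]

/-- Weighted Chebyshev sum inequality for oppositely ordered sequences. -/
theorem Antivary.weighted_card_mul_sum_le_sum_mul_sum {ι : Type*} [Fintype ι] {w f g : ι → ℝ}
    (hw : ∀ i, 0 ≤ w i) (hfg : Antivary f g) :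
    (∑ i, w i) * ∑ i, w i * f i * g i ≤ (∑ i, w i * f i) * ∑ i, w i * g i := by
  set F : ι → ι → ℝ := fun i j => w i * (w j * f j * g j) - w i * f i * (w j * g j)
  have hF : ∑ i, ∑ j, F i j =
      (∑ i, w i) * ∑ i, w i * f i * g i - (∑ i, w i * f i) * ∑ i, w i * g i := by
    simp only [F, sum_sub_distrib, sum_mul_sum]
  have hsymm : ∑ i, ∑ j, w i * w j * ((f j - f i) * (g j - g i)) = 2 * ∑ i, ∑ j, F i j :=
    calc ∑ i, ∑ j, w i * w j * ((f j - f i) * (g j - g i))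
        _ = ∑ i, ∑ j, (F i j + F j i) := by simp only [F]; congr! 2; ring
        _ = 2 * ∑ i, ∑ j, F i j := by
          rw [sum_congr rfl fun i _ => sum_add_distrib, sum_add_distrib,
            sum_comm (f := fun i j => F j i)]
          ring
  have hnonpos : ∑ i, ∑ j, w i * w j * ((f j - f i) * (g j - g i)) ≤ 0 :=
    sum_nonpos fun i _ => sum_nonpos fun j _ =>
      mul_nonpos_of_nonneg_of_nonpos (mul_nonneg (hw i) (hw j)) (hfg.sub_mul_sub_nonpos i j)
  linarith

theorem antivary_log_div_self {ι : Type*} {s : ι → ℝ} (hs : ∀ i, Real.exp 1 ≤ s i) :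
    Antivary s fun i => Real.log (s i) / s i := fun i j hlt =>
  le_of_not_gt fun hij => hlt.not_ge <| Real.log_div_self_antitoneOn (hs i) (hs j) hij.le

theorem Antivary.sum_mul_sum_mul_log_le {ι : Type*} [Fintype ι] {s x : ι → ℝ}
    (hs : ∀ i, 0 < s i) (hx : Antivary x fun i => Real.log (s i) / s i) :
    (∑ i, s i) * ∑ i, x i * Real.log (s i) ≤ (∑ i, s i * x i) * ∑ i, Real.log (s i) := by
  have h := hx.weighted_card_mul_sum_le_sum_mul_sum fun i => (hs i).le
  have hcancel : ∀ i, s i * (Real.log (s i) / s i) = Real.log (s i) := fun i =>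
    mul_div_cancel₀ _ (hs i).ne'
  simpa only [mul_assoc, hcancel, mul_left_comm (s _) (x _)] using h

/-- For stakes at least `e`, the HHI of the logarithmic stake weights is at most
the HHI of the linear stake weights. -/
theorem lsw_hhi_le (m : ℕ) (hm : 0 < m) (s : Fin m → ℝ)
    (hs : ∀ i, Real.exp 1 ≤ s i) :
    hhi m (fun i => Real.log (s i)) ≤ hhi m s := by
  have hs_pos : ∀ i, 0 < s i := fun i => (Real.exp_pos 1).trans_le (hs i)
  have hanti := antivary_log_div_self hs
  have hanti_log : Antivary (fun i => Real.log (s i)) fun i => Real.log (s i) / s i :=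
    fun _ _ h => Real.log_le_log (hs_pos _) (hanti h)
  have hne : (univ : Finset (Fin m)).Nonempty := univ_nonempty_iff.mpr ⟨⟨0, hm⟩⟩
  set A := ∑ i, Real.log (s i)
  set B := ∑ i, s i
  have hA : 0 < A := sum_pos (fun i _ => Real.log_pos
    ((Real.one_lt_exp_iff.mpr one_pos).trans_le (hs i))) hne
  have hB : 0 < B := sum_pos (fun i _ => hs_pos i) hne
  have hlog := hanti_log.sum_mul_sum_mul_log_le hs_pos
  have hlin := hanti.sum_mul_sum_mul_log_le hs_pos
  rw [hhi_eq_sum_sq_div, hhi_eq_sum_sq_div, div_le_div_iff₀ (by positivity) (by positivity)]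
  simp only [sq]
  calc (∑ i, Real.log (s i) * Real.log (s i)) * (B * B)
      _ = B * (B * ∑ i, Real.log (s i) * Real.log (s i)) := by ring
      _ ≤ B * ((∑ i, s i * Real.log (s i)) * A) := by gcongr
      _ = A * (B * ∑ i, s i * Real.log (s i)) := by ring
      _ ≤ A * ((∑ i, s i * s i) * A) := by gcongr
      _ = (∑ i, s i * s i) * (A * A) := by ring
end
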